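/- arXiv:2305.09614 — 4 statements merged into one kernel-verified Lean document; each statement's English description precedes it below -/
import Mathlib

section
/- Let g: ℂ → ℂ be an entire function, α ∈ ℂ, R > 0, and let P ∈ ℂ[z] be a nonzero polynomial. Assume g(z) ≠ α for all z with |z| = R, that every zero of g − α in the open ball B(0, R) is a simple zero, and that every such zero is also a root of P. Then there exists δ > 0 such that for all real ε ∈ (0, δ), the function f(z) = g(z) + ε·P(z) satisfies f⁻¹({α}) ∩ B(0, R) = g⁻¹({α}) ∩ B(0, R). -/
/-!
Near a zero `w` of `g - α` write `g z - α = (z - w) • dslope g w z` and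
`f z = (z - w) • dslope f w z`.
The factor `dslope g w z + ε • dslope f w z` is jointly continuous in `(ε, z)` and equals
`g' w ≠ 0` at `(0, w)`, so for small `ε` the perturbation creates no new solutions near `w`;
away from the zeros of `g - α` it creates none by continuity. Compactness of the closed ball
makes the smallness of `ε` uniform, and the circle `‖z‖ = R` carries no zeros by assumption.
-/

open Filter Topology Metric

section Perturbation

variable {𝕜 E : Type*} [NontriviallyNormedField 𝕜] [NormedAddCommGroup E] [NormedSpace 𝕜 E]
  {g f : 𝕜 → E}

theorem eventually_eq_of_add_smul_eq_of_deriv_ne_zero {w : 𝕜} (hg : DifferentiableAt 𝕜 g w)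
    (hf : DifferentiableAt 𝕜 f w) (hg' : deriv g w ≠ 0) (hfw : f w = 0) :
    ∀ᶠ p : 𝕜 × 𝕜 in 𝓝 (0, w), g p.2 + p.1 • f p.2 = g w → p.2 = w := by
  set F : 𝕜 × 𝕜 → E := fun p => dslope g w p.2 + p.1 • dslope f w p.2
  have hF : ContinuousAt F (0, w) :=
    ((continuousAt_dslope_same.2 hg).comp continuousAt_snd).add
      (continuousAt_fst.smul ((continuousAt_dslope_same.2 hf).comp continuousAt_snd))
  have hF₀ : F (0, w) ≠ 0 := by simpa [F, dslope_same] using hg'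
  filter_upwards [hF.eventually_ne hF₀] with ⟨ε, z⟩ hFz hz
  have hfactor : (z - w) • F (ε, z) = g z + ε • f z - g w := by
    simp only [F, smul_add, sub_smul_dslope, smul_comm (z - w) ε, hfw, sub_zero]
    abel
  rw [hz, sub_self, smul_eq_zero, sub_eq_zero] at hfactor
  exact hfactor.resolve_right hFz

theorem IsCompact.eventually_forall_eq_of_add_smul_eq {K : Set 𝕜} (hK : IsCompact K) {α : E}
    (hg : ∀ w ∈ K, DifferentiableAt 𝕜 g w) (hf : ∀ w ∈ K, DifferentiableAt 𝕜 f w)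
    (hsimple : ∀ w ∈ K, g w = α → deriv g w ≠ 0)
    (hroot : ∀ w ∈ K, g w = α → f w = 0) :
    ∀ᶠ ε in 𝓝 (0 : 𝕜), ∀ z ∈ K, g z + ε • f z = α → g z = α := by
  refine hK.eventually_forall_of_forall_eventually fun w hw => ?_
  by_cases hgw : g w = α
  · filter_upwards [eventually_eq_of_add_smul_eq_of_deriv_ne_zero (hg w hw) (hf w hw)
      (hsimple w hw hgw) (hroot w hw hgw)] with p hp hpα
    rw [hp (hpα.trans hgw.symm), hgw]
  · have hcont : ContinuousAt (fun p : 𝕜 × 𝕜 => g p.2 + p.1 • f p.2) (0, w) :=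
      ((hg w hw).continuousAt.comp continuousAt_snd).add
        (continuousAt_fst.smul ((hf w hw).continuousAt.comp continuousAt_snd))
    filter_upwards [hcont.eventually_ne (by simpa using hgw)] with p hp hpα
    exact absurd hpα hp

end Perturbation

theorem preimage_stable_under_perturbation_general
    (g : ℂ → ℂ) (hg : Differentiable ℂ g) (α : ℂ) (R : ℝ)
    (P : Polynomial ℂ)
    (hbd : ∀ z : ℂ, ‖z‖ = R → g z ≠ α)
    (hsimple : ∀ z ∈ Metric.ball (0 : ℂ) R, g z = α → deriv g z ≠ 0)
    (hroot : ∀ z ∈ Metric.ball (0 : ℂ) R, g z = α → P.eval z = 0) :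
    ∃ δ : ℝ, 0 < δ ∧ ∀ ε : ℝ, 0 < ε → ε < δ →
      (fun z => g z + (ε : ℂ) * P.eval z) ⁻¹' {α} ∩ Metric.ball (0 : ℂ) R
        = g ⁻¹' {α} ∩ Metric.ball (0 : ℂ) R := by
  have ball_of_root : ∀ z ∈ closedBall (0 : ℂ) R, g z = α → z ∈ ball (0 : ℂ) R :=
    fun z hz hgz => mem_ball_zero_iff.2 <| (mem_closedBall_zero_iff.1 hz).lt_of_ne (hbd z · hgz)
  obtain ⟨δ, hδ, hsmall⟩ := Metric.eventually_nhds_iff.1 <|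
    (isCompact_closedBall (0 : ℂ) R).eventually_forall_eq_of_add_smul_eq (f := P.eval)
      (fun w _ => hg w) (fun w _ => P.differentiableAt)
      (fun w hw hgw => hsimple w (ball_of_root w hw hgw) hgw)
      (fun w hw hgw => hroot w (ball_of_root w hw hgw) hgw)
  refine ⟨δ, hδ, fun ε hε hεδ => Set.ext fun z =>
    ⟨fun ⟨hfz, hz⟩ => ⟨?_, hz⟩, fun ⟨hgz, hz⟩ => ⟨?_, hz⟩⟩⟩
  · have hεδ' : dist (ε : ℂ) 0 < δ := by simpa [abs_of_pos hε] using hεδ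
    exact hsmall hεδ' z (ball_subset_closedBall hz) hfz
  · simp only [Set.mem_preimage, Set.mem_singleton_iff] at hgz ⊢
    rw [hroot z hz hgz, hgz, mul_zero, add_zero]

/-- If `g` is entire, `g ≠ α` on the circle `|z| = R`, every zero of `g − α` in
`B(0,R)` is simple, and every such zero is a root of the nonzero polynomial `P`,
then for all small `ε > 0` the preimages of `α` in `B(0,R)` under `g + ε·P` and
under `g` coincide. -/
theorem preimage_stable_under_perturbation
    (g : ℂ → ℂ) (hg : Differentiable ℂ g) (α : ℂ) (R : ℝ) (hR : 0 < R)
    (P : Polynomial ℂ) (hP : P ≠ 0)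
    (hbd : ∀ z : ℂ, ‖z‖ = R → g z ≠ α)
    (hsimple : ∀ z ∈ Metric.ball (0 : ℂ) R, g z = α → deriv g z ≠ 0)
    (hroot : ∀ z ∈ Metric.ball (0 : ℂ) R, g z = α → P.eval z = 0) :
    ∃ δ : ℝ, 0 < δ ∧ ∀ ε : ℝ, 0 < ε → ε < δ →
      (fun z => g z + (ε : ℂ) * P.eval z) ⁻¹' {α} ∩ Metric.ball (0 : ℂ) R
        = g ⁻¹' {α} ∩ Metric.ball (0 : ℂ) R :=
  preimage_stable_under_perturbation_general g hg α R P hbd hsimple hroot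
end

section
/- Let g: ℂ → ℂ be a transcendental entire function and let P ∈ ℂ[z] be a nonzero polynomial. Then the entire function z ↦ g'(z)·P(z) − g(z)·P'(z) is not a polynomial function; equivalently, if g: ℂ → ℂ is entire, P ∈ ℂ[z] is nonzero, and g'·P − g·P' agrees with a polynomial function on ℂ, then g is a polynomial function. -/
/-!
Induction on `deg P`. For `P = c` constant, `c g'` is a polynomial, hence so is `g`.
Otherwise factor `P = (z - a) P₁` at a root `a` and write `g = g(a) + (z - a) h` with
`h = dslope g a` entire. A direct computation gives
`g' P - g P' = (z - a)² (h' P₁ - h P₁') - g(a) P'`,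
so the continuous function `h' P₁ - h P₁'` is a polynomial divided by `(z - a)²`, hence itself a
polynomial; by induction `h`, and therefore `g`, is a polynomial.
-/

open Polynomial

theorem Polynomial.exists_derivative_eq {K : Type*} [Field K] [CharZero K] (Q : K[X]) :
    ∃ A : K[X], derivative A = Q := by
  induction Q using Polynomial.induction_on' with
  | add p q hp hq =>
    obtain ⟨A, rfl⟩ := hp
    obtain ⟨B, rfl⟩ := hq
    exact ⟨A + B, derivative_add⟩
  | monomial n c =>
    refine ⟨C (c / (n + 1)) * X ^ (n + 1), ?_⟩
    rw [derivative_C_mul_X_pow, Nat.add_sub_cancel, ← C_mul_X_pow_eq_monomial, Nat.cast_add,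
      Nat.cast_one, div_mul_cancel₀ _ (Nat.cast_add_one_ne_zero n)]

def IsPolynomialFun (f : ℂ → ℂ) : Prop :=
  ∃ G : ℂ[X], ∀ z, f z = G.eval z

noncomputable def fnWronskian (g : ℂ → ℂ) (P : ℂ[X]) (z : ℂ) : ℂ :=
  deriv g z * P.eval z - g z * (derivative P).eval z

theorem fnWronskian_C (g : ℂ → ℂ) (c z : ℂ) : fnWronskian g (C c) z = c * deriv g z := by
  simp [fnWronskian, mul_comm]

theorem eq_add_sub_mul_dslope (g : ℂ → ℂ) (a z : ℂ) : g z = g a + (z - a) * dslope g a z := by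
  rw [← smul_eq_mul, sub_smul_dslope, add_sub_cancel]

theorem Differentiable.dslope {g : ℂ → ℂ} (hg : Differentiable ℂ g) (a : ℂ) :
    Differentiable ℂ (dslope g a) :=
  differentiableOn_univ.mp <|
    (Complex.differentiableOn_dslope Filter.univ_mem).mpr hg.differentiableOn

theorem fnWronskian_X_sub_C_mul {g : ℂ → ℂ} (hg : Differentiable ℂ g) (a : ℂ) (P : ℂ[X]) (z : ℂ) :
    fnWronskian g ((X - C a) * P) z =
      (z - a) ^ 2 * fnWronskian (dslope g a) P z - g a * (derivative ((X - C a) * P)).eval z := by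
  have hg' : deriv g z = dslope g a z + (z - a) * deriv (dslope g a) z := by
    have hd :=
      (((hasDerivAt_id' z).sub_const a).fun_mul (hg.dslope a z).hasDerivAt).const_add (g a)
    rw [← _root_.funext (eq_add_sub_mul_dslope g a)] at hd
    rw [hd.deriv, one_mul]
  simp only [fnWronskian, hg', derivative_mul, derivative_sub, derivative_X, derivative_C,
    sub_zero, one_mul, eval_add, eval_mul, eval_sub, eval_X, eval_C]
  rw [eq_add_sub_mul_dslope g a z]
  ring

theorem Differentiable.continuous_fnWronskian {g : ℂ → ℂ} (hg : Differentiable ℂ g) (P : ℂ[X]) :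
    Continuous (fnWronskian g P) :=
  (hg.deriv.continuous.mul P.continuous).sub (hg.continuous.mul (derivative P).continuous)

namespace IsPolynomialFun

theorem of_deriv {g : ℂ → ℂ} (hg : Differentiable ℂ g) (hg' : IsPolynomialFun (deriv g)) :
    IsPolynomialFun g := by
  obtain ⟨Q, hQ⟩ := hg'
  obtain ⟨A, rfl⟩ := exists_derivative_eq Q
  have hconst : ∀ z, g z - A.eval z = g 0 - A.eval 0 := fun z =>
    is_const_of_deriv_eq_zero (hg.sub A.differentiable) (fun w => by
      rw [deriv_sub (hg w) (A.differentiable w), Polynomial.deriv, hQ, sub_self]) z 0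
  exact ⟨A + C (g 0 - A.eval 0), fun z => by simp [← hconst z]⟩

theorem of_sub_mul {f : ℂ → ℂ} (hf : Continuous f) {a : ℂ}
    (h : IsPolynomialFun fun z => (z - a) * f z) : IsPolynomialFun f := by
  obtain ⟨R, hR⟩ := h
  have hRa : R.IsRoot a := by simpa using (hR a).symm
  have hfac : ∀ z, R.eval z = (z - a) * (R /ₘ (X - C a)).eval z := fun z => by
    conv_lhs => rw [← mul_divByMonic_eq_iff_isRoot.2 hRa]
    simp
  refine ⟨R /ₘ (X - C a), congrFun ?_⟩
  refine Continuous.ext_on (dense_compl_singleton a) hf (R /ₘ (X - C a)).continuous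
    fun z hz => ?_
  exact mul_left_cancel₀ (sub_ne_zero.2 hz) ((hR z).trans (hfac z))

theorem of_fnWronskian {g : ℂ → ℂ} (hg : Differentiable ℂ g) {P : ℂ[X]} (hP : P ≠ 0)
    (hW : IsPolynomialFun (fnWronskian g P)) : IsPolynomialFun g := by
  induction hn : P.natDegree generalizing g P with
  | zero =>
    rw [eq_C_of_natDegree_eq_zero hn] at hP hW
    obtain ⟨Q, hQ⟩ := hW
    refine of_deriv hg ⟨C (P.coeff 0)⁻¹ * Q, fun z => ?_⟩
    rw [eval_mul, eval_C, ← hQ, fnWronskian_C, inv_mul_cancel_left₀ fun h => hP (by simp [h])]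
  | succ n ih =>
    have hdeg : 0 < P.degree := natDegree_pos_iff_degree_pos.1 (by omega)
    obtain ⟨a, ha⟩ := Complex.exists_root hdeg
    obtain ⟨P₁, rfl⟩ : ∃ P₁, P = (X - C a) * P₁ := ⟨_, (mul_divByMonic_eq_iff_isRoot.2 ha).symm⟩
    have hP₁ : P₁ ≠ 0 := right_ne_zero_of_mul hP
    have hn₁ : P₁.natDegree = n := by
      rw [natDegree_mul (X_sub_C_ne_zero a) hP₁, natDegree_X_sub_C] at hn
      omega
    have hh := hg.dslope a
    have hWh : IsPolynomialFun (fnWronskian (dslope g a) P₁) := by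
      obtain ⟨Q, hQ⟩ := hW
      have hsq : IsPolynomialFun fun z => (z - a) * ((z - a) * fnWronskian (dslope g a) P₁ z) :=
        ⟨Q + C (g a) * derivative ((X - C a) * P₁), fun z => by
          rw [eval_add, eval_mul, eval_C, ← hQ, fnWronskian_X_sub_C_mul hg]
          ring⟩
      have hcont := hh.continuous_fnWronskian P₁
      exact of_sub_mul hcont (of_sub_mul ((continuous_id.sub continuous_const).mul hcont) hsq)
    obtain ⟨G, hG⟩ := ih hh hP₁ hWh hn₁
    exact ⟨C (g a) + (X - C a) * G, fun z => by simp [eq_add_sub_mul_dslope g a z, hG]⟩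

end IsPolynomialFun

/-- If `g` is entire, `P` is a nonzero polynomial, and `g'·P − g·P'` agrees with
a polynomial function on `ℂ`, then `g` is a polynomial function. (Hence for a
transcendental entire `g`, `g'·P − g·P'` is never a polynomial function.) -/
theorem wronskian_polynomial_implies_polynomial
    (g : ℂ → ℂ) (hg : Differentiable ℂ g)
    (P : Polynomial ℂ) (hP : P ≠ 0)
    (Q : Polynomial ℂ)
    (hQ : ∀ z : ℂ,
      deriv g z * P.eval z - g z * (Polynomial.derivative P).eval z = Q.eval z) :
    ∃ G : Polynomial ℂ, ∀ z : ℂ, g z = G.eval z :=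
  IsPolynomialFun.of_fnWronskian hg hP ⟨Q, hQ⟩
end

section
/- Let g: ℂ → ℂ be a transcendental entire function, let Q ∈ ℂ[z] be a nonzero polynomial, and let α ∈ ℂ. Then there is at most one ε ∈ ℂ such that α does not belong to the image of the function z ↦ g(z) + ε·Q(z). -/
/-!
If `ε₁ ≠ ε₂` were both exceptional, `fᵢ = g + εᵢ Q - α` would be zero-free entire functions,
so `f₂ / f₁ = exp w` with `w` entire. Since `f₂ - f₁ = (ε₂ - ε₁) Q`, the quotient equals `1`
only at the roots of `Q`, so `w` omits all but finitely many points of `2πiℤ` and is constant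
by the Little Picard theorem. Then `f₂ = λ f₁`, which forces either `Q = 0` or `g` to be a
polynomial.

Little Picard is proved in the elementary way: a function omitting `0` and `1` can be written
as `exp (πi (cosh V + 1))` with `V` entire, and `V` then omits every point where `cosh` is an odd
natural number. These points meet every disc of radius `6`, whereas a Bloch-type rescaling
argument shows that the range of a nonconstant entire function contains discs of every radius.
-/

open Complex Metric Set
open scoped NNReal Real

lemma Differentiable.exists_cexp_eq {f : ℂ → ℂ} (hf : Differentiable ℂ f)
    (h0 : ∀ z, f z ≠ 0) :
    ∃ L : ℂ → ℂ, Differentiable ℂ L ∧ ∀ z, Complex.exp (L z) = f z := by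
  obtain ⟨F, hF⟩ := (hf.deriv.div hf h0).isExactOn_univ
  have hF' : ∀ z, HasDerivAt F (_root_.deriv f z / f z) z := fun z => hF z (mem_univ z)
  have hFd : Differentiable ℂ F := fun z => (hF' z).differentiableAt
  have hconst : ∀ z, f z * Complex.exp (-F z) = f 0 * Complex.exp (-F 0) := by
    refine fun z => is_const_of_deriv_eq_zero (hf.mul hFd.neg.cexp) (fun w => ?_) z 0
    rw [((hf w).hasDerivAt.mul (hF' w).neg.cexp).deriv]
    field_simp [h0 w]
    ring
  refine ⟨fun z => F z + Complex.log (f 0 * Complex.exp (-F 0)), hFd.add_const _, fun z => ?_⟩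
  rw [Complex.exp_add, exp_log (mul_ne_zero (h0 0) (Complex.exp_ne_zero _)), ← hconst z,
    Complex.exp_neg]
  field_simp [Complex.exp_ne_zero (F z)]

lemma Differentiable.exists_ccosh_eq {s : ℂ → ℂ} (hs : Differentiable ℂ s)
    (h1 : ∀ z, s z ≠ 1) (hm1 : ∀ z, s z ≠ -1) :
    ∃ V : ℂ → ℂ, Differentiable ℂ V ∧ ∀ z, Complex.cosh (V z) = s z := by
  have hs2 : Differentiable ℂ fun z => s z ^ 2 - 1 := by fun_prop
  obtain ⟨L, hLd, hL⟩ := hs2.exists_cexp_eq fun z h => by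
    have : (s z - 1) * (s z + 1) = 0 := by linear_combination h
    rcases mul_eq_zero.mp this with h | h
    · exact h1 z (sub_eq_zero.mp h)
    · exact hm1 z (eq_neg_of_add_eq_zero_left h)
  set r : ℂ → ℂ := fun z => Complex.exp (L z / 2)
  have hr : ∀ z, r z ^ 2 = s z ^ 2 - 1 := fun z => by
    rw [← Complex.exp_nat_mul, ← hL z]; push_cast; ring_nf
  -- `(s + r) (s - r) = 1`: `s + r` has a logarithm `V`, and then `exp (-V) = s - r`
  have hsr : ∀ z, (s z + r z) * (s z - r z) = 1 := fun z => by linear_combination -hr z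
  have hsrd : Differentiable ℂ fun z => s z + r z := by fun_prop
  obtain ⟨V, hVd, hV⟩ := hsrd.exists_cexp_eq fun z h => by simpa [h] using hsr z
  refine ⟨V, hVd, fun z => ?_⟩
  have hVneg : Complex.exp (-V z) = s z - r z := by
    rw [Complex.exp_neg, hV z]; exact inv_eq_of_mul_eq_one_right (hsr z)
  rw [Complex.cosh, hV z, hVneg]; ring

lemma Real.cosh_sub_one_le_cosh_add_sub_cosh {x d : ℝ} (hx : 0 ≤ x) (hd : 0 ≤ d) :
    Real.cosh d - 1 ≤ Real.cosh (x + d) - Real.cosh x := by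
  have hsinh : 0 ≤ Real.sinh x * Real.sinh d :=
    mul_nonneg (Real.sinh_nonneg_iff.mpr hx) (Real.sinh_nonneg_iff.mpr hd)
  rw [Real.cosh_add]
  nlinarith [Real.one_le_cosh x, Real.one_le_cosh d]

lemma Real.abs_lt_five_halves_of_cosh_lt_three {d : ℝ} (hd : Real.cosh d < 3) : |d| < 5 / 2 := by
  by_contra! h
  have hexp : 6 < Real.exp (5 / 2) := by
    nlinarith [Real.quadratic_le_exp_of_nonneg (by norm_num : (0 : ℝ) ≤ 5 / 2)]
  have := Real.cosh_le_cosh.mpr (show |(5 / 2 : ℝ)| ≤ |d| by rwa [abs_of_pos (by norm_num)])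
  rw [Real.cosh_eq] at this
  linarith [Real.exp_pos (-(5 / 2 : ℝ))]

lemma Real.exists_cosh_eq_odd_of_nonneg {x : ℝ} (hx : 0 ≤ x) :
    ∃ y, |x - y| < 5 / 2 ∧ ∃ n : ℕ, Real.cosh y = 2 * n + 1 := by
  set n := ⌊(Real.cosh x - 1) / 2⌋₊
  have hn : (2 * n + 1 : ℝ) ≤ Real.cosh x ∧ Real.cosh x < 2 * n + 3 := by
    have h1 := Nat.floor_le (show 0 ≤ (Real.cosh x - 1) / 2 by linarith [Real.one_le_cosh x])
    have h2 := Nat.lt_floor_add_one ((Real.cosh x - 1) / 2)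
    constructor <;> linarith
  have hodd : (1 : ℝ) ≤ 2 * n + 1 := by linarith [(Nat.cast_nonneg n : (0 : ℝ) ≤ n)]
  set y := Real.arcosh (2 * n + 1)
  have hy : Real.cosh y = 2 * n + 1 := Real.cosh_arcosh hodd
  have hy0 : 0 ≤ y := Real.arcosh_nonneg hodd
  have hyx : y ≤ x := by
    rw [← Real.arcosh_cosh hx]
    exact (Real.arcosh_le_arcosh (by linarith) (by linarith [Real.one_le_cosh x])).mpr hn.1
  refine ⟨y, Real.abs_lt_five_halves_of_cosh_lt_three ?_, n, hy⟩
  have := Real.cosh_sub_one_le_cosh_add_sub_cosh hy0 (sub_nonneg.mpr hyx)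
  rw [add_sub_cancel] at this
  linarith [hn.2]

lemma Real.exists_cosh_eq_odd (x : ℝ) :
    ∃ y, |x - y| < 5 / 2 ∧ ∃ n : ℕ, Real.cosh y = 2 * n + 1 := by
  rcases le_total 0 x with hx | hx
  · exact Real.exists_cosh_eq_odd_of_nonneg hx
  · obtain ⟨y, hxy, n, hy⟩ := Real.exists_cosh_eq_odd_of_nonneg (neg_nonneg.mpr hx)
    exact ⟨-y, by rwa [show x - -y = -(-x - y) by ring, abs_neg],
      n, by rwa [Real.cosh_neg]⟩

lemma Complex.exists_cosh_eq_odd_mem_closedBall (c : ℂ) :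
    ∃ ω ∈ closedBall c 6, ∃ n : ℕ, Complex.cosh ω = 2 * n + 1 := by
  obtain ⟨y, hy, n, hcosh⟩ := Real.exists_cosh_eq_odd c.re
  set k : ℤ := round (c.im / (2 * π))
  have hπ : 0 < 2 * π := by positivity
  have hk : |c.im - k * (2 * π)| ≤ π :=
    calc |c.im - k * (2 * π)| = |(c.im / (2 * π) - k) * (2 * π)| := by
          rw [sub_mul, div_mul_cancel₀ _ hπ.ne']
      _ = |c.im / (2 * π) - k| * (2 * π) := by rw [abs_mul, abs_of_pos hπ]
      _ ≤ 1 / 2 * (2 * π) := by gcongr; exact abs_sub_round _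
      _ = π := by ring
  refine ⟨y + k * (2 * π * I), ?_, n, ?_⟩
  · rw [mem_closedBall, dist_comm, dist_eq_norm]
    refine (norm_le_abs_re_add_abs_im _).trans ?_
    simp only [sub_re, sub_im, add_re, add_im, ofReal_re, ofReal_im, mul_re, mul_im,
      intCast_re, intCast_im, I_re, I_im]
    norm_num
    linarith [Real.pi_lt_d2]
  · rw [(cosh_periodic.int_mul k) y, ← ofReal_cosh, hcosh]
    push_cast; ring

lemma approximatesLinearOn_closedBall_of_norm_deriv_le {h : ℂ → ℂ} {a : ℂ} {t r B : ℝ}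
    (hh : DifferentiableOn ℂ h (ball a t)) (hB : ∀ z ∈ ball a t, ‖deriv h z‖ ≤ B)
    (hr : 0 ≤ r) (hrt : r < t) :
    ApproximatesLinearOn h (deriv h a • ContinuousLinearMap.id ℂ ℂ) (closedBall a r)
      (2 * B * r / t).toNNReal := by
  have ht : 0 < t := hr.trans_lt hrt
  have hBa : ‖deriv h a‖ ≤ B := hB a (mem_ball_self ht)
  have hsub : closedBall a r ⊆ ball a t := closedBall_subset_ball hrt
  have hSchwarz : ∀ z ∈ closedBall a r, ‖deriv h z - deriv h a‖ ≤ 2 * B * r / t := by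
    intro z hz
    have hmaps : MapsTo (deriv h) (ball a t) (closedBall (deriv h a) (2 * B)) := fun w hw => by
      rw [mem_closedBall, dist_eq_norm]
      linarith [norm_sub_le (deriv h w) (deriv h a), hB w hw]
    calc ‖deriv h z - deriv h a‖
        ≤ 2 * B / t * dist z a := by
          rw [← dist_eq_norm]
          exact dist_le_div_mul_dist_of_mapsTo_ball (hh.deriv isOpen_ball) hmaps (hsub hz)
      _ ≤ 2 * B / t * r := by
          have : 0 ≤ B := (norm_nonneg _).trans hBa
          gcongr
          exact mem_closedBall.mp hz
      _ = 2 * B * r / t := by ring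
  have hderiv : ∀ u ∈ closedBall a r, HasDerivWithinAt (fun u => h u - deriv h a * u)
      (deriv h u - deriv h a) (closedBall a r) u := fun u hu => by
    have hu := (hh.differentiableAt (isOpen_ball.mem_nhds (hsub hu))).hasDerivAt
    have := (hu.sub ((hasDerivAt_id' u).const_mul (deriv h a))).hasDerivWithinAt
      (s := closedBall a r)
    rwa [mul_one] at this
  intro x hx y hy
  have hmv := (convex_closedBall a r).norm_image_sub_le_of_norm_hasDerivWithin_le
    hderiv hSchwarz hy hx
  rw [Real.coe_toNNReal _ ((norm_nonneg _).trans (hSchwarz a (mem_closedBall_self hr)))]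
  convert hmv using 2
  simp only [_root_.smul_apply, ContinuousLinearMap.id_apply, smul_eq_mul]
  ring

lemma closedBall_subset_image_of_norm_deriv_le {h : ℂ → ℂ} {a : ℂ} {t : ℝ}
    (hh : DifferentiableOn ℂ h (ball a t)) (ht : 0 < t) (ha : deriv h a ≠ 0)
    (hB : ∀ z ∈ ball a t, ‖deriv h z‖ ≤ 2 * ‖deriv h a‖) :
    closedBall (h a) (‖deriv h a‖ * t / 40) ⊆ h '' closedBall a (t / 32) := by
  set M := ‖deriv h a‖
  have hM : 0 < M := norm_pos_iff.mpr ha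
  -- `h` is `M / 8`-close to its linearization on `closedBall a (t / 32)`,
  -- and `(M - M / 8) * (t / 32) ≥ M * t / 40`
  have happrox := approximatesLinearOn_closedBall_of_norm_deriv_le hh hB (by positivity)
    (by linarith : t / 32 < t)
  let inv : (deriv h a • ContinuousLinearMap.id ℂ ℂ).NonlinearRightInverse :=
    { toFun := fun y => (deriv h a)⁻¹ * y
      nnnorm := ‖(deriv h a)⁻¹‖₊
      bound' := fun y => by simp
      right_inv' := fun y => by simp [ha] }
  have hsurj := happrox.surjOn_closedBall_of_nonlinearRightInverse inv (by positivity)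
    subset_rfl
  have hinv : ((inv.nnnorm : ℝ))⁻¹ = M := by simp [inv, M]
  refine (closedBall_subset_closedBall ?_).trans hsurj
  rw [hinv, Real.coe_toNNReal _ (by positivity)]
  field_simp
  nlinarith

lemma Continuous.exists_forall_mem_ball_le_two_mul {X : Type*} [PseudoMetricSpace X]
    [ProperSpace X] {m : X → ℝ} (hm : Continuous m) {x₀ : X} (hx₀ : 0 < m x₀) {ρ : ℝ}
    (hρ : 0 < ρ) :
    ∃ a t, 0 < t ∧ ρ * m x₀ ≤ 2 * t * m a ∧ ∀ z ∈ ball a t, m z ≤ 2 * m a := by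
  -- `a` maximizes `(ρ - dist z x₀) * m z` over `closedBall x₀ ρ`
  set φ : X → ℝ := fun z => (ρ - dist z x₀) * m z
  obtain ⟨a, ha, hmax⟩ := (isCompact_closedBall x₀ ρ).exists_isMaxOn
    ⟨x₀, mem_closedBall_self hρ.le⟩ (by fun_prop : Continuous φ).continuousOn
  have hφ : ρ * m x₀ ≤ φ a := by simpa [φ] using hmax (mem_closedBall_self hρ.le)
  set t := (ρ - dist a x₀) / 2
  have hφa : φ a = 2 * t * m a := by simp only [φ, t]; ring
  have ht0 : 0 ≤ t := by have := mem_closedBall.mp ha; simp only [t]; linarith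
  have hpos : 0 < t * m a := by nlinarith [mul_pos hρ hx₀]
  have hma : 0 < m a := pos_of_mul_pos_right hpos ht0
  have ht : 0 < t := pos_of_mul_pos_left hpos hma.le
  refine ⟨a, t, ht, hφa ▸ hφ, fun z hz => ?_⟩
  have hzx₀ : dist z x₀ < ρ - t := by
    have hdist : dist a x₀ = ρ - 2 * t := by simp only [t]; ring
    linarith [dist_triangle z a x₀, mem_ball.mp hz]
  have hφz : φ z ≤ 2 * t * m a := hφa ▸ hmax (mem_closedBall.mpr (by linarith))
  simp only [φ] at hφz
  nlinarith

lemma exists_closedBall_subset_range_of_deriv_ne_zero {h : ℂ → ℂ} (hh : Differentiable ℂ h)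
    {z₀ : ℂ} (hz₀ : deriv h z₀ ≠ 0) (R : ℝ) : ∃ c, closedBall c R ⊆ range h := by
  set K := ‖deriv h z₀‖
  have hK : 0 < K := norm_pos_iff.mpr hz₀
  -- `ρ` is chosen so that the radius `‖deriv h a‖ * t / 40 ≥ ρ * K / 80` exceeds `R`
  obtain ⟨a, t, ht, hρ, hB⟩ := hh.deriv.continuous.norm.exists_forall_mem_ball_le_two_mul hK
    (ρ := 80 * (|R| + 1) / K) (by positivity)
  rw [div_mul_cancel₀ _ hK.ne'] at hρ
  have ha : deriv h a ≠ 0 := by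
    rintro hzero
    rw [hzero, norm_zero, mul_zero] at hρ
    linarith [abs_nonneg R]
  refine ⟨h a, (closedBall_subset_closedBall ?_).trans
    ((closedBall_subset_image_of_norm_deriv_le hh.differentiableOn ht ha hB).trans
      (image_subset_range _ _))⟩
  linarith [le_abs_self R]

lemma Differentiable.apply_eq_apply_of_forall_cosh_ne_odd {V : ℂ → ℂ} (hV : Differentiable ℂ V)
    (hodd : ∀ z (n : ℕ), Complex.cosh (V z) ≠ 2 * n + 1) (z w : ℂ) : V z = V w := by
  refine is_const_of_deriv_eq_zero hV (fun z₀ => ?_) z w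
  by_contra hz₀
  obtain ⟨c, hc⟩ := exists_closedBall_subset_range_of_deriv_ne_zero hV hz₀ 6
  obtain ⟨ω, hω, n, hn⟩ := Complex.exists_cosh_eq_odd_mem_closedBall c
  obtain ⟨z, rfl⟩ := hc hω
  exact hodd z n hn

/-- **Little Picard theorem.** -/
theorem Differentiable.apply_eq_apply_of_omits {f : ℂ → ℂ} (hf : Differentiable ℂ f) {a b : ℂ}
    (hab : a ≠ b) (ha : ∀ z, f z ≠ a) (hb : ∀ z, f z ≠ b) (z w : ℂ) : f z = f w := by
  have hba : b - a ≠ 0 := sub_ne_zero.mpr hab.symm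
  obtain ⟨ℓ, hℓd, hℓ⟩ := ((hf.sub_const a).div_const (b - a)).exists_cexp_eq
    fun z => div_ne_zero (sub_ne_zero.mpr (ha z)) hba
  have hπI : (π : ℂ) * I ≠ 0 := mul_ne_zero (ofReal_ne_zero.mpr Real.pi_ne_zero) I_ne_zero
  -- `exp ℓ = (f - a) / (b - a)` omits `1`, so `ℓ / (π i) - 1` omits the odd integers
  have hodd : ∀ z (k : ℤ), ℓ z / (π * I) - 1 ≠ 2 * k + 1 := fun z k hk => by
    have hℓk : ℓ z = (k + 1 : ℤ) * (2 * π * I) := by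
      rw [sub_eq_iff_eq_add, div_eq_iff hπI] at hk
      push_cast
      linear_combination hk
    apply hb z
    have := hℓ z
    rw [hℓk, exp_int_mul_two_pi_mul_I, eq_div_iff hba] at this
    linear_combination -this
  obtain ⟨V, hVd, hV⟩ := ((hℓd.div_const _).sub_const 1).exists_ccosh_eq
    (fun z h => hodd z 0 (by rw [h]; norm_num)) (fun z h => hodd z (-1) (by rw [h]; norm_num))
  have hf : ∀ z, f z = a + (b - a) * Complex.exp (π * I * (Complex.cosh (V z) + 1)) := by
    intro z
    rw [hV z, sub_add_cancel, mul_div_cancel₀ _ hπI, hℓ z]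
    field_simp
    ring
  have hVconst := hVd.apply_eq_apply_of_forall_cosh_ne_odd
    (fun z n h => hodd z n (by rw [← hV z, h]; push_cast; ring)) z w
  rw [hf z, hf w, hVconst]

lemma Differentiable.apply_eq_apply_of_finite_setOf_eq_one {h : ℂ → ℂ} (hh : Differentiable ℂ h)
    (h0 : ∀ z, h z ≠ 0) (h1 : {z | h z = 1}.Finite) (z w : ℂ) : h z = h w := by
  obtain ⟨L, hLd, hL⟩ := hh.exists_cexp_eq h0
  set lattice : ℤ → ℂ := fun k => k * (2 * π * I)
  have hinj : Function.Injective lattice := fun k₁ k₂ hk => by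
    exact_mod_cast mul_right_cancel₀ two_pi_I_ne_zero hk
  -- `L` omits all but finitely many points of the lattice `2πiℤ`
  have hfin : (lattice ⁻¹' (L '' {z | h z = 1})).Finite := (h1.image L).preimage hinj.injOn
  have homit : ∀ k ∉ lattice ⁻¹' (L '' {z | h z = 1}), ∀ z, L z ≠ lattice k :=
    fun k hk z hz => hk ⟨z, by rw [mem_ofPred_eq, ← hL z, hz, exp_int_mul_two_pi_mul_I], hz⟩
  obtain ⟨k₁, hk₁, k₂, hk₂, hne⟩ := hfin.infinite_compl.nontrivial
  rw [← hL z, ← hL w,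
    hLd.apply_eq_apply_of_omits (hinj.ne hne) (homit k₁ hk₁) (homit k₂ hk₂) z w]

lemma Differentiable.exists_eq_const_mul_of_finite_setOf_eq {f₁ f₂ : ℂ → ℂ}
    (hf₁ : Differentiable ℂ f₁) (hf₂ : Differentiable ℂ f₂) (h₁ : ∀ z, f₁ z ≠ 0)
    (h₂ : ∀ z, f₂ z ≠ 0) (hfin : {z | f₂ z = f₁ z}.Finite) : ∃ c, ∀ z, f₂ z = c * f₁ z := by
  have hd : Differentiable ℂ fun z => f₂ z / f₁ z := hf₂.div hf₁ h₁
  have hquot := hd.apply_eq_apply_of_finite_setOf_eq_one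
    (fun z => div_ne_zero (h₂ z) (h₁ z)) (by simpa only [div_eq_one_iff_eq (h₁ _)] using hfin)
  exact ⟨f₂ 0 / f₁ 0, fun z => by rw [← hquot z 0, div_mul_cancel₀ _ (h₁ z)]⟩

lemma ne_eval_of_transcendental {K : Type*} [CommRing K] [Nontrivial K] {g : K → K}
    (htrans : ∀ R : MvPolynomial (Fin 2) K,
      (∀ z : K, MvPolynomial.eval ![z, g z] R = 0) → R = 0)
    (P : Polynomial K) : g ≠ fun z => P.eval z := by
  have hX0 : ∀ v : Fin 2 → K,
      MvPolynomial.eval v (Polynomial.aeval (MvPolynomial.X 0) P) = P.eval (v 0) := by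
    intro v
    induction P using Polynomial.induction_on' with
    | add p q hp hq => simp [hp, hq]
    | monomial n c => simp
  intro hgP
  set R : MvPolynomial (Fin 2) K := MvPolynomial.X 1 - Polynomial.aeval (MvPolynomial.X 0) P
  have heval : ∀ v : Fin 2 → K, MvPolynomial.eval v R = v 1 - P.eval (v 0) := fun v => by
    simp only [R, map_sub, MvPolynomial.eval_X, hX0]
  have hR : R = 0 := htrans R fun z => by simp [heval, hgP]
  simpa [hR] using heval ![0, P.eval 0 + 1]

/-- For a transcendental entire function `g`, a nonzero polynomial `Q`, and
`α ∈ ℂ`, there is at most one `ε ∈ ℂ` such that `α` is not in the image of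
`z ↦ g(z) + ε·Q(z)`. -/
theorem at_most_one_exceptional_epsilon
    (g : ℂ → ℂ) (hg : Differentiable ℂ g)
    (htrans : ∀ R : MvPolynomial (Fin 2) ℂ,
      (∀ z : ℂ, MvPolynomial.eval ![z, g z] R = 0) → R = 0)
    (Q : Polynomial ℂ) (hQ : Q ≠ 0) (α : ℂ) :
    {ε : ℂ | α ∉ Set.range fun z => g z + ε * Q.eval z}.Subsingleton := by
  intro ε₁ hε₁ ε₂ hε₂
  by_contra hne
  have hε : ε₂ - ε₁ ≠ 0 := sub_ne_zero.mpr (Ne.symm hne)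
  have hf0 : ∀ ε, α ∉ range (fun z => g z + ε * Q.eval z) → ∀ z, g z + ε * Q.eval z - α ≠ 0 :=
    fun ε hε z hz => hε ⟨z, by linear_combination hz⟩
  obtain ⟨c, hc⟩ := Differentiable.exists_eq_const_mul_of_finite_setOf_eq (by fun_prop)
    (by fun_prop) (hf0 ε₁ hε₁) (hf0 ε₂ hε₂) <|
    (Polynomial.finite_setOfPred_isRoot hQ).subset fun z (hz : _ = _) => by
      simpa [hε] using (by linear_combination hz : (ε₂ - ε₁) * Q.eval z = 0)
  have hprop : ∀ z, (c - 1) * (g z + ε₁ * Q.eval z - α) = (ε₂ - ε₁) * Q.eval z :=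
    fun z => by linear_combination -hc z
  rcases eq_or_ne c 1 with rfl | hc1
  · exact hQ (Polynomial.funext fun z => by simpa [hε] using (hprop z).symm)
  · refine ne_eval_of_transcendental htrans
      (.C ((ε₂ - ε₁) / (c - 1) - ε₁) * Q + .C α) (funext fun z => ?_)
    simp only [Polynomial.eval_add, Polynomial.eval_mul, Polynomial.eval_C]
    field_simp [sub_ne_zero.mpr hc1]
    linear_combination hprop z
end

section
/- Every entire function f: ℂ → ℂ that is not a polynomial function is transcendental; that is, if f is entire and there exists a nonzero polynomial P ∈ ℂ[x, y] with P(z, f(z)) = 0 for all z ∈ ℂ, then f is a polynomial function. -/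
/-!
Write `P` as a polynomial in `y` whose coefficients `aᵢ` are polynomials in `z`. For large `‖z‖`
the leading coefficient `aₙ(z)` is bounded away from `0`, so Cauchy's bound on the roots of
`y ↦ P(z, y)` gives `f z = O(‖z‖ ^ d)`. Cauchy's estimates on large circles then kill every Taylor
coefficient of `f` at `0` of index `> d`, so `f` is a polynomial.
-/

open Polynomial Polynomial.Bivariate Bornology Asymptotics Filter Topology

theorem Polynomial.Bivariate.eval_equivMvPolynomial {R : Type*} [CommSemiring R] (x y : R)
    (p : R[X][Y]) : MvPolynomial.eval ![x, y] (equivMvPolynomial R p) = p.evalEval x y := by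
  rw [← coe_aevalAeval_eq_evalEval (A := R)]
  change (MvPolynomial.aeval ![x, y]).comp (equivMvPolynomial R).toAlgHom p = _
  congr 1
  ext <;> simp [equivMvPolynomial]

theorem Polynomial.cauchyBound_le_sum_norm_coeff {K : Type*} [NormedDivisionRing K] (p : K[X]) :
    (p.cauchyBound : ℝ) ≤
      (∑ i ∈ Finset.range p.natDegree, ‖p.coeff i‖) / ‖p.leadingCoeff‖ + 1 := by
  have hsup : (Finset.range p.natDegree).sup (‖p.coeff ·‖₊) ≤
      ∑ i ∈ Finset.range p.natDegree, ‖p.coeff i‖₊ :=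
    Finset.sup_le fun i hi => Finset.single_le_sum (f := (‖p.coeff ·‖₊)) (fun _ _ => zero_le) hi
  rw [cauchyBound]
  push_cast
  gcongr
  simpa using NNReal.coe_le_coe.mpr hsup

theorem Polynomial.isBigO_pow_of_forall_isRoot {K : Type*} [NormedField K] {f : K → K}
    {Q : K[X][X]} (hQ : Q ≠ 0) (hroot : ∀ z, (Q.map (evalRingHom z)).IsRoot (f z)) :
    ∃ d : ℕ, f =O[cobounded K] (· ^ d) := by
  set n := Q.natDegree
  set d := (Finset.range n).sup fun i => (Q.coeff i).natDegree
  have hcoeff : ∀ i ∈ Finset.range n, (Q.coeff i).eval =O[cobounded K] (· ^ d) := fun i hi => by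
    simpa using isBigO_cobounded_of_degree_le (P := Q.coeff i) (Q := X ^ d)
      (by rw [degree_X_pow]
          exact degree_le_of_natDegree_le (Finset.le_sup (f := fun i => (Q.coeff i).natDegree) hi))
  have hone : (fun _ => (1 : ℝ)) =O[cobounded K] (· ^ d) := by
    simpa using (isBigO_pow_pow_cobounded_of_le (R := K) (Nat.zero_le d)).norm_left
  obtain ⟨c, hlead⟩ : ∃ c, ∀ᶠ z in cobounded K, ‖(1 : K)‖ ≤ c * ‖Q.leadingCoeff.eval z‖ := by
    simpa using (isBigO_cobounded_of_degree_le (P := C 1) (Q := Q.leadingCoeff)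
      (degree_C_le.trans (zero_le_degree_iff.mpr (leadingCoeff_ne_zero.mpr hQ)))).bound
  have hbound : ∀ᶠ z in cobounded K,
      ‖f z‖ ≤ c * ∑ i ∈ Finset.range n, ‖(Q.coeff i).eval z‖ + 1 := by
    filter_upwards [hlead] with z hz
    rw [norm_one] at hz
    have hz0 : Q.leadingCoeff.eval z ≠ 0 := fun h => by norm_num [h] at hz
    have hdeg : (Q.map (evalRingHom z)).natDegree = n :=
      natDegree_map_of_leadingCoeff_ne_zero _ hz0
    have hlc : (Q.map (evalRingHom z)).leadingCoeff = Q.leadingCoeff.eval z :=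
      leadingCoeff_map_of_leadingCoeff_ne_zero _ hz0
    have hne : Q.map (evalRingHom z) ≠ 0 := fun h => hz0 (by rw [← hlc, h, leadingCoeff_zero])
    calc ‖f z‖ ≤ (Q.map (evalRingHom z)).cauchyBound :=
          (IsRoot.norm_lt_cauchyBound hne (hroot z)).le
      _ ≤ (∑ i ∈ Finset.range n, ‖(Q.coeff i).eval z‖) / ‖Q.leadingCoeff.eval z‖ + 1 := by
          simpa [hdeg, hlc, coeff_map] using cauchyBound_le_sum_norm_coeff (Q.map (evalRingHom z))
      _ ≤ c * ∑ i ∈ Finset.range n, ‖(Q.coeff i).eval z‖ + 1 := by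
          rw [div_eq_inv_mul]
          gcongr
          rwa [inv_le_iff_one_le_mul₀ (norm_pos_iff.mpr hz0)]
  refine ⟨d, (IsBigO.of_norm_eventuallyLE hbound).trans ?_⟩
  exact ((IsBigO.fun_sum fun i hi => (hcoeff i hi).norm_left).const_mul_left c).add hone

theorem Differentiable.iteratedDeriv_eq_zero_of_isBigO_pow {F : Type*} [NormedAddCommGroup F]
    [NormedSpace ℂ F] [CompleteSpace F] {f : ℂ → F} (hf : Differentiable ℂ f) {d n : ℕ}
    (hO : f =O[cobounded ℂ] (· ^ d)) (hn : d < n) : iteratedDeriv n f 0 = 0 := by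
  obtain ⟨C, hC⟩ := hO.bound
  have hsphere : ∀ᶠ R in atTop, ∀ z ∈ Metric.sphere (0 : ℂ) R, ‖f z‖ ≤ C * R ^ d := by
    rw [← comap_norm_atTop, eventually_comap] at hC
    filter_upwards [hC] with R hR z hz
    rw [mem_sphere_zero_iff_norm] at hz
    simpa [hz] using hR z hz
  have hcauchy : ∀ᶠ R in atTop, ‖iteratedDeriv n f 0‖ ≤ n.factorial * C * (R ^ (n - d))⁻¹ := by
    filter_upwards [hsphere, eventually_gt_atTop 0] with R hR hR0
    calc ‖iteratedDeriv n f 0‖ ≤ n.factorial * (C * R ^ d) / R ^ n :=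
          Complex.norm_iteratedDeriv_le_of_forall_mem_sphere_norm_le n hR0 hf.diffContOnCl hR
      _ = n.factorial * C * (R ^ (n - d))⁻¹ := by
          rw [← pow_sub_mul_pow R hn.le]
          field_simp
  have hlim : Tendsto (fun R : ℝ => n.factorial * C * (R ^ (n - d))⁻¹) atTop (𝓝 0) := by
    simpa using (tendsto_pow_atTop (Nat.sub_ne_zero_of_lt hn)).inv_tendsto_atTop.const_mul
      (n.factorial * C)
  exact norm_le_zero_iff.mp (ge_of_tendsto hlim hcauchy)

theorem Differentiable.exists_eq_eval_of_isBigO_pow {f : ℂ → ℂ} (hf : Differentiable ℂ f) {d : ℕ}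
    (hO : f =O[cobounded ℂ] (· ^ d)) : ∃ Q : ℂ[X], ∀ z, f z = Q.eval z := by
  refine ⟨∑ n ∈ Finset.range (d + 1), C ((n.factorial : ℂ)⁻¹ * iteratedDeriv n f 0) * X ^ n,
    fun z => ?_⟩
  rw [← Complex.taylorSeries_eq_of_entire' 0 z hf, tsum_eq_sum (s := Finset.range (d + 1))]
  · simp [eval_finsetSum]
  · intro n hn
    rw [hf.iteratedDeriv_eq_zero_of_isBigO_pow hO (by simpa using hn)]
    simp

/-- Every entire function that satisfies a nontrivial polynomial relation
`P(z, f(z)) = 0` is a polynomial function; equivalently, every entire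
non-polynomial function is transcendental. -/
theorem entire_algebraic_is_polynomial
    (f : ℂ → ℂ) (hf : Differentiable ℂ f)
    (P : MvPolynomial (Fin 2) ℂ) (hP : P ≠ 0)
    (hrel : ∀ z : ℂ, MvPolynomial.eval ![z, f z] P = 0) :
    ∃ Q : Polynomial ℂ, ∀ z : ℂ, f z = Q.eval z := by
  set Q := (equivMvPolynomial ℂ).symm P
  have hQ : Q ≠ 0 := (map_ne_zero_iff _ (equivMvPolynomial ℂ).symm.injective).mpr hP
  have hroot : ∀ z, (Q.map (evalRingHom z)).IsRoot (f z) := fun z => by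
    rw [IsRoot.def, map_evalRingHom_eval, ← eval_equivMvPolynomial, AlgEquiv.apply_symm_apply]
    exact hrel z
  obtain ⟨d, hd⟩ := isBigO_pow_of_forall_isRoot hQ hroot
  exact hf.exists_eq_eval_of_isBigO_pow hd
end
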